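/- arXiv:1708.00952 — 4 statements merged into one kernel-verified Lean document; each statement's English description precedes it below -/
import Mathlib

section
/- Let n ≥ 1 and let x₁ ≥ x₂ ≥ … ≥ xₙ be real numbers. Set S_φ = Σ_{k=1}^n (−1)^{k+1} φ(x_k) and S_Φ = Σ_{k=1}^n (−1)^{k+1} Φ(x_k). Then S_φ² ≤ (2/π) · S_Φ · (1 − S_Φ). -/
open Real MeasureTheory

/-- The standard normal density `φ`. -/
noncomputable def stdNormalPDF (x : ℝ) : ℝ :=
  (Real.sqrt (2 * Real.pi))⁻¹ * Real.exp (-(x ^ 2) / 2)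

/-- The standard normal cumulative distribution function `Φ`. -/
noncomputable def stdNormalCDF (x : ℝ) : ℝ :=
  ∫ u in Set.Iic x, stdNormalPDF u

/-!
Put `ψ = Σ_k (-1)^k 𝟙_{(-∞, x_k]}`. Since `x` is antitone, the indicators form an antitone
sequence at every point, so `0 ≤ ψ ≤ 1`; moreover `S_Φ = ∫ ψ φ` and, as `φ' = -u φ`,
`S_φ = -∫ u ψ(u) φ(u) du`. Choose `c` with `Φ(c) = S_Φ`. Among weights `0 ≤ ψ ≤ 1` with
`∫ ψ φ = Φ(c)`, the first moment `∫ u ψ φ` is smallest for `ψ = 𝟙_{(-∞, c]}` (bathtub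
principle), which gives `S_φ ≤ φ(c)`; applied to `1 - ψ` and `-c` it gives `-S_φ ≤ φ(c)`.
It remains to show `φ(c)² ≤ (2/π) Φ(c) (1 - Φ(c))`: the defect `F = (2/π) Φ (1 - Φ) - φ²` is
even, vanishes at `0` and at `∞`, and `F' = φ G` where `G` changes sign at most once on
`[0, ∞)`, from `+` to `-`; so `F` first increases and then decreases there.
-/

open ProbabilityTheory Set Filter Topology

lemma Antitone.alternating_sum_mem_Icc {R : Type*} [Ring R] [PartialOrder R]
    [IsOrderedRing R] :
    ∀ {n : ℕ} {b : Fin (n + 1) → R}, Antitone b → (∀ k, 0 ≤ b k) →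
      ∑ k : Fin (n + 1), (-1 : R) ^ (k : ℕ) * b k ∈ Icc 0 (b 0)
  | 0, b, _, hb0 => by simp [hb0 0]
  | n + 1, b, hb, hb0 => by
    have ih := Antitone.alternating_sum_mem_Icc (hb.comp_monotone Fin.strictMono_succ.monotone)
      fun k => hb0 k.succ
    rw [Fin.sum_univ_succ]
    simp only [Fin.val_zero, pow_zero, one_mul, Fin.val_succ, pow_succ, mul_neg_one, neg_mul,
      Finset.sum_neg_distrib, ← sub_eq_add_neg, Function.comp_apply] at ih ⊢
    exact ⟨sub_nonneg.2 (ih.2.trans (hb (Fin.zero_le _))), sub_le_self _ ih.1⟩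

lemma alternating_sum_indicator_Iic_mem_Icc {n : ℕ} {x : Fin n → ℝ} (hx : Antitone x) (u : ℝ) :
    ∑ k : Fin n, (-1 : ℝ) ^ (k : ℕ) * (Iic (x k)).indicator 1 u ∈ Icc 0 1 := by
  rcases n with _ | n
  · simp
  refine Icc_subset_Icc_right ?_ (Antitone.alternating_sum_mem_Icc (fun i j hij => ?_) fun k => ?_)
  · exact indicator_le_self' (fun _ _ => zero_le_one) u
  · exact indicator_le_indicator_of_subset (Iic_subset_Iic.2 (hx hij)) (fun _ => zero_le_one) u
  · exact indicator_nonneg (fun _ _ => zero_le_one) u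

lemma integral_sum_indicator_mul {ι α : Type*} [MeasurableSpace α] {μ : Measure α}
    (s : Finset ι) (a : ι → ℝ) {t : ι → Set α} (ht : ∀ k, MeasurableSet (t k)) {f : α → ℝ}
    (hf : Integrable f μ) :
    ∫ u, (∑ k ∈ s, a k * (t k).indicator 1 u) * f u ∂μ = ∑ k ∈ s, a k * ∫ u in t k, f u ∂μ := by
  simp_rw [Finset.sum_mul, mul_assoc, ← indicator_mul_left, Pi.one_apply, one_mul]
  rw [integral_finsetSum _ fun k _ => (hf.indicator (ht k)).const_mul _]
  simp_rw [integral_const_mul, integral_indicator (ht _)]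

lemma MeasureTheory.Integrable.mul_of_mem_Icc {α : Type*} [MeasurableSpace α] {μ : Measure α}
    {ψ g : α → ℝ} (hg : Integrable g μ) (hψm : Measurable ψ) (hψ : ∀ u, ψ u ∈ Icc 0 1) :
    Integrable (fun u => ψ u * g u) μ :=
  hg.bdd_mul (c := 1) hψm.aestronglyMeasurable <| ae_of_all _ fun u => by
    rw [Real.norm_eq_abs, abs_le]
    constructor <;> linarith [(hψ u).1, (hψ u).2]

section SignChange

variable {f f' : ℝ → ℝ} {a : ℝ}

lemma antitoneOn_Ici_of_deriv_sign_change (hf : ∀ x, HasDerivAt f (f' x) x) (ha : 0 ≤ f a)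
    (hf' : ∀ x y, a ≤ x → x ≤ y → f' x < 0 → f' y ≤ 0) {x : ℝ} (hx : a ≤ x) (hfx : f x < 0) :
    AntitoneOn f (Ici x) := by
  have hax : a < x := hx.lt_of_ne (by rintro rfl; linarith)
  obtain ⟨ξ, hξ, hslope⟩ := exists_hasDerivAt_eq_slope f f' hax
    (HasDerivAt.continuousOn fun y _ => hf y) fun y _ => hf y
  have hξneg : f' ξ < 0 := by
    rw [hslope]
    exact div_neg_of_neg_of_pos (by linarith) (by linarith)
  refine antitoneOn_of_hasDerivWithinAt_nonpos (convex_Ici x)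
    (HasDerivAt.continuousOn fun y _ => hf y) (fun y _ => (hf y).hasDerivWithinAt) ?_
  rw [interior_Ici]
  exact fun y hy => hf' ξ y hξ.1.le (hξ.2.trans hy).le hξneg

lemma nonneg_of_deriv_sign_change (hf : ∀ x, HasDerivAt f (f' x) x) (ha : 0 ≤ f a)
    (hlim : Tendsto f atTop (𝓝 0)) (hf' : ∀ x y, a ≤ x → x ≤ y → f' x < 0 → f' y ≤ 0)
    {x : ℝ} (hx : a ≤ x) : 0 ≤ f x := by
  by_contra! hfx
  have hanti := antitoneOn_Ici_of_deriv_sign_change hf ha hf' hx hfx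
  refine hfx.not_ge (le_of_tendsto hlim ?_)
  filter_upwards [Ici_mem_atTop x] with y hy
  exact hanti self_mem_Ici hy hy

end SignChange

lemma stdNormalPDF_eq_gaussianPDFReal : stdNormalPDF = gaussianPDFReal 0 1 := by
  ext x
  simp [stdNormalPDF, gaussianPDFReal]

lemma stdNormalPDF_pos (x : ℝ) : 0 < stdNormalPDF x := by
  rw [stdNormalPDF]
  positivity

lemma stdNormalPDF_neg (x : ℝ) : stdNormalPDF (-x) = stdNormalPDF x := by
  simp [stdNormalPDF]

lemma sq_stdNormalPDF_zero : stdNormalPDF 0 ^ 2 = (2 * π)⁻¹ := by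
  simp [stdNormalPDF, mul_pow, inv_pow, sq_sqrt pi_pos.le]

lemma continuous_stdNormalPDF : Continuous stdNormalPDF := by
  unfold stdNormalPDF
  fun_prop

lemma hasDerivAt_stdNormalPDF (x : ℝ) : HasDerivAt stdNormalPDF (-x * stdNormalPDF x) x := by
  have h : HasDerivAt (fun y : ℝ => -(y ^ 2) / 2) (-x) x :=
    ((hasDerivAt_pow 2 x).neg.div_const 2).congr_deriv (by ring)
  exact (h.exp.const_mul (√(2 * π))⁻¹).congr_deriv (by rw [stdNormalPDF]; ring)

lemma tendsto_stdNormalPDF_cocompact : Tendsto stdNormalPDF (cocompact ℝ) (𝓝 0) := by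
  have hsq : Tendsto (fun x : ℝ => -(x ^ 2) / 2) (cocompact ℝ) atBot := by
    have := (tendsto_pow_atTop two_ne_zero).comp (tendsto_norm_cocompact_atTop (E := ℝ))
    simpa [Function.comp_def] using (tendsto_neg_atTop_atBot.comp this).atBot_div_const two_pos
  have := (tendsto_exp_atBot.comp hsq).const_mul (√(2 * π))⁻¹
  rwa [mul_zero] at this

lemma integrable_stdNormalPDF : Integrable stdNormalPDF := by
  simpa [stdNormalPDF_eq_gaussianPDFReal] using integrable_gaussianPDFReal 0 1

lemma integral_stdNormalPDF : ∫ u, stdNormalPDF u = 1 := by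
  simpa [stdNormalPDF_eq_gaussianPDFReal] using integral_gaussianPDFReal_eq_one 0 one_ne_zero

lemma integrable_mul_stdNormalPDF : Integrable fun u => u * stdNormalPDF u := by
  convert (integrable_mul_exp_neg_mul_sq (b := 1 / 2) (by norm_num)).const_mul (√(2 * π))⁻¹
    using 2 with u
  rw [stdNormalPDF]
  ring_nf

lemma integral_mul_stdNormalPDF : ∫ u, u * stdNormalPDF u = 0 := by
  simpa [integral_gaussianReal_eq_integral_smul, stdNormalPDF_eq_gaussianPDFReal, mul_comm]
    using integral_id_gaussianReal (μ := 0) (v := 1)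

lemma setIntegral_Iic_mul_stdNormalPDF (c : ℝ) :
    ∫ u in Iic c, u * stdNormalPDF u = -stdNormalPDF c := by
  have := integral_Iic_of_hasDerivAt_of_tendsto' (a := c) (f := -stdNormalPDF)
    (fun u _ => by simpa using (hasDerivAt_stdNormalPDF u).neg)
    integrable_mul_stdNormalPDF.integrableOn
    (tendsto_stdNormalPDF_cocompact.mono_left atBot_le_cocompact).neg
  simpa using this

lemma stdNormalCDF_eq_cdf : stdNormalCDF = cdf (gaussianReal 0 1) := by
  ext x
  rw [cdf_eq_real, measureReal_def, gaussianReal_apply_eq_integral 0 one_ne_zero,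
    ENNReal.toReal_ofReal
      (setIntegral_nonneg measurableSet_Iic fun u _ => gaussianPDFReal_nonneg 0 1 u),
    stdNormalCDF, stdNormalPDF_eq_gaussianPDFReal]

lemma hasDerivAt_stdNormalCDF (x : ℝ) : HasDerivAt stdNormalCDF (stdNormalPDF x) x := by
  have h (y : ℝ) : stdNormalCDF y = stdNormalCDF 0 + ∫ u in (0 : ℝ)..y, stdNormalPDF u := by
    rw [← intervalIntegral.integral_Iic_sub_Iic integrable_stdNormalPDF.integrableOn
      integrable_stdNormalPDF.integrableOn, stdNormalCDF, stdNormalCDF]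
    ring
  rw [funext h]
  exact ((continuous_stdNormalPDF.integral_hasStrictDerivAt 0 x).hasDerivAt).const_add _

lemma continuous_stdNormalCDF : Continuous stdNormalCDF :=
  continuous_iff_continuousAt.2 fun x => (hasDerivAt_stdNormalCDF x).continuousAt

lemma stdNormalCDF_neg (x : ℝ) : stdNormalCDF (-x) = 1 - stdNormalCDF x := by
  rw [← integral_stdNormalPDF, ← intervalIntegral.integral_Iic_add_Ioi (b := x)
    integrable_stdNormalPDF.integrableOn integrable_stdNormalPDF.integrableOn, stdNormalCDF,
    stdNormalCDF, ← integral_comp_neg_Ioi]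
  simp [stdNormalPDF_neg]

lemma stdNormalCDF_zero : stdNormalCDF 0 = 1 / 2 := by
  linarith [neg_zero (G := ℝ) ▸ stdNormalCDF_neg 0]

lemma exists_stdNormalCDF_eq {p : ℝ} (hp : p ∈ Ioo 0 1) : ∃ c, stdNormalCDF c = p := by
  refine mem_range_of_exists_le_of_exists_ge continuous_stdNormalCDF ?_ ?_ <;>
    rw [stdNormalCDF_eq_cdf]
  exacts [((tendsto_cdf_atBot _).eventually_le_const hp.1).exists,
    ((tendsto_cdf_atTop _).eventually_const_le hp.2).exists]

noncomputable def normalDefect (y : ℝ) : ℝ :=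
  2 / π * stdNormalCDF y * (1 - stdNormalCDF y) - stdNormalPDF y ^ 2

noncomputable def normalDefectRate (y : ℝ) : ℝ :=
  2 / π * (1 - 2 * stdNormalCDF y) + 2 * y * stdNormalPDF y

lemma hasDerivAt_normalDefect (y : ℝ) :
    HasDerivAt normalDefect (stdNormalPDF y * normalDefectRate y) y := by
  have hΦ := hasDerivAt_stdNormalCDF y
  refine (((hΦ.const_mul (2 / π)).mul (hΦ.const_sub 1)).sub
    ((hasDerivAt_stdNormalPDF y).pow 2)).congr_deriv ?_
  rw [normalDefectRate]
  ring

lemma hasDerivAt_normalDefectRate (y : ℝ) :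
    HasDerivAt normalDefectRate (2 * stdNormalPDF y * (1 - 2 / π - y ^ 2)) y := by
  refine (((hasDerivAt_stdNormalCDF y).const_mul 2 |>.const_sub 1 |>.const_mul (2 / π)).add
    (((hasDerivAt_id' y).const_mul 2).mul (hasDerivAt_stdNormalPDF y))).congr_deriv ?_
  field_simp
  ring

lemma normalDefect_zero : normalDefect 0 = 0 := by
  rw [normalDefect, stdNormalCDF_zero, sq_stdNormalPDF_zero]
  field_simp
  ring

lemma normalDefectRate_zero : normalDefectRate 0 = 0 := by
  simp [normalDefectRate, stdNormalCDF_zero]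

lemma tendsto_normalDefect_atTop : Tendsto normalDefect atTop (𝓝 0) := by
  have hΦ : Tendsto stdNormalCDF atTop (𝓝 1) := stdNormalCDF_eq_cdf ▸ tendsto_cdf_atTop _
  have hφ := tendsto_stdNormalPDF_cocompact.mono_left atTop_le_cocompact
  have := ((tendsto_const_nhds (x := 2 / π)).mul hΦ |>.mul
    ((tendsto_const_nhds (x := (1 : ℝ))).sub hΦ)).sub (hφ.pow 2)
  rw [sub_self, mul_zero, zero_pow two_ne_zero, sub_zero] at this
  exact this

lemma normalDefectRate_nonpos_of_neg {x y : ℝ} (hx : 0 ≤ x) (hxy : x ≤ y)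
    (hGx : normalDefectRate x < 0) : normalDefectRate y ≤ 0 := by
  refine (antitoneOn_Ici_of_deriv_sign_change hasDerivAt_normalDefectRate
    normalDefectRate_zero.ge (fun s t hs hst hs' => ?_) hx hGx self_mem_Ici hxy hxy).trans hGx.le
  have hs'' := neg_of_mul_neg_right hs' (mul_pos two_pos (stdNormalPDF_pos s)).le
  have := pow_le_pow_left₀ hs hst 2
  exact mul_nonpos_of_nonneg_of_nonpos (mul_pos two_pos (stdNormalPDF_pos t)).le (by linarith)

lemma normalDefect_nonneg (c : ℝ) : 0 ≤ normalDefect c := by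
  wlog hc : 0 ≤ c generalizing c
  · have := this (-c) (by linarith)
    rw [normalDefect, stdNormalPDF_neg, stdNormalCDF_neg] at this
    rw [normalDefect]
    linarith
  refine nonneg_of_deriv_sign_change hasDerivAt_normalDefect normalDefect_zero.ge
    tendsto_normalDefect_atTop (fun s t hs hst hs' => ?_) hc
  exact mul_nonpos_of_nonneg_of_nonpos (stdNormalPDF_pos t).le
    (normalDefectRate_nonpos_of_neg hs hst (neg_of_mul_neg_right hs' (stdNormalPDF_pos s).le))

lemma sq_stdNormalPDF_le (c : ℝ) :
    stdNormalPDF c ^ 2 ≤ 2 / π * stdNormalCDF c * (1 - stdNormalCDF c) := by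
  have := normalDefect_nonneg c
  rw [normalDefect] at this
  linarith

lemma neg_stdNormalPDF_sub_mul_stdNormalCDF_le {ψ : ℝ → ℝ} (hψm : Measurable ψ)
    (hψ : ∀ u, ψ u ∈ Icc 0 1) (c : ℝ) :
    -stdNormalPDF c - c * stdNormalCDF c ≤
      (∫ u, ψ u * (u * stdNormalPDF u)) - c * ∫ u, ψ u * stdNormalPDF u := by
  have hint : Integrable fun u => (u - c) * stdNormalPDF u := by
    refine (integrable_mul_stdNormalPDF.sub (integrable_stdNormalPDF.const_mul c)).congr
      (ae_of_all _ fun u => ?_)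
    simp [sub_mul]
  have hlhs : -stdNormalPDF c - c * stdNormalCDF c =
      ∫ u, (Iic c).indicator (fun u => (u - c) * stdNormalPDF u) u := by
    simp_rw [integral_indicator measurableSet_Iic, sub_mul]
    rw [integral_sub integrable_mul_stdNormalPDF.integrableOn
      (integrable_stdNormalPDF.const_mul c).integrableOn, integral_const_mul,
      setIntegral_Iic_mul_stdNormalPDF, stdNormalCDF]
  have hrhs : (∫ u, ψ u * (u * stdNormalPDF u)) - c * ∫ u, ψ u * stdNormalPDF u =
      ∫ u, ψ u * ((u - c) * stdNormalPDF u) := by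
    rw [← integral_const_mul, ← integral_sub
      (integrable_mul_stdNormalPDF.mul_of_mem_Icc hψm hψ)
      ((integrable_stdNormalPDF.mul_of_mem_Icc hψm hψ).const_mul c)]
    congr 1 with u
    ring
  rw [hlhs, hrhs]
  refine integral_mono (hint.indicator measurableSet_Iic) (hint.mul_of_mem_Icc hψm hψ) fun u => ?_
  have hφ := (stdNormalPDF_pos u).le
  obtain ⟨hψ0, hψ1⟩ := hψ u
  by_cases hu : u ≤ c
  · rw [indicator_of_mem (show u ∈ Iic c from hu)]
    have : (u - c) * stdNormalPDF u ≤ 0 := mul_nonpos_of_nonpos_of_nonneg (by linarith) hφ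
    nlinarith
  · rw [indicator_of_notMem (show u ∉ Iic c from hu)]
    exact mul_nonneg hψ0 (mul_nonneg (by linarith) hφ)

lemma integral_mul_id_mul_stdNormalPDF_eq_zero {ψ : ℝ → ℝ} (hψm : Measurable ψ)
    (hψ : ∀ u, ψ u ∈ Icc 0 1) (h : ∫ u, ψ u * stdNormalPDF u = 0) :
    ∫ u, ψ u * (u * stdNormalPDF u) = 0 := by
  have hzero : (fun u => ψ u * stdNormalPDF u) =ᵐ[volume] 0 :=
    (integral_eq_zero_iff_of_nonneg (fun u => mul_nonneg (hψ u).1 (stdNormalPDF_pos u).le)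
      (integrable_stdNormalPDF.mul_of_mem_Icc hψm hψ)).1 h
  rw [integral_congr_ae (g := 0) (hzero.mono fun u hu => ?_)]
  · simp
  simp only [Pi.zero_apply] at hu ⊢
  rw [mul_left_comm, hu, mul_zero]

lemma sq_integral_mul_id_mul_stdNormalPDF_le {ψ : ℝ → ℝ} (hψm : Measurable ψ)
    (hψ : ∀ u, ψ u ∈ Icc 0 1) :
    (∫ u, ψ u * (u * stdNormalPDF u)) ^ 2 ≤
      2 / π * (∫ u, ψ u * stdNormalPDF u) * (1 - ∫ u, ψ u * stdNormalPDF u) := by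
  set B := ∫ u, ψ u * stdNormalPDF u
  set M := ∫ u, ψ u * (u * stdNormalPDF u)
  have hψm' : Measurable fun u => 1 - ψ u := measurable_const.sub hψm
  have hψ' (u : ℝ) : 1 - ψ u ∈ Icc 0 1 := ⟨by linarith [(hψ u).2], by linarith [(hψ u).1]⟩
  have hB' : ∫ u, (1 - ψ u) * stdNormalPDF u = 1 - B := by
    simp_rw [sub_mul, one_mul]
    rw [integral_sub integrable_stdNormalPDF (integrable_stdNormalPDF.mul_of_mem_Icc hψm hψ),
      integral_stdNormalPDF]
  have hM' : ∫ u, (1 - ψ u) * (u * stdNormalPDF u) = -M := by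
    simp_rw [sub_mul, one_mul]
    rw [integral_sub integrable_mul_stdNormalPDF
      (integrable_mul_stdNormalPDF.mul_of_mem_Icc hψm hψ), integral_mul_stdNormalPDF, zero_sub]
  have hB0 : 0 ≤ B := integral_nonneg fun u => mul_nonneg (hψ u).1 (stdNormalPDF_pos u).le
  have hB1 : 0 ≤ 1 - B :=
    hB' ▸ integral_nonneg fun u => mul_nonneg (hψ' u).1 (stdNormalPDF_pos u).le
  rcases hB0.eq_or_lt with hB0 | hB0
  · have hM : M = 0 := integral_mul_id_mul_stdNormalPDF_eq_zero hψm hψ hB0.symm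
    simp [hM, ← hB0]
  rcases hB1.eq_or_lt with hB1 | hB1
  · have := integral_mul_id_mul_stdNormalPDF_eq_zero hψm' hψ' (hB'.trans hB1.symm)
    rw [hM', neg_eq_zero] at this
    simp [this, ← hB1]
  obtain ⟨c, hc⟩ := exists_stdNormalCDF_eq ⟨hB0, by linarith⟩
  have hlower := neg_stdNormalPDF_sub_mul_stdNormalCDF_le hψm hψ c
  change _ ≤ M - c * B at hlower
  rw [hc] at hlower
  have hupper := neg_stdNormalPDF_sub_mul_stdNormalCDF_le hψm' hψ' (-c)
  beta_reduce at hupper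
  rw [hM', hB', stdNormalPDF_neg, stdNormalCDF_neg, hc] at hupper
  calc M ^ 2 ≤ stdNormalPDF c ^ 2 := sq_le_sq' (by linarith) (by linarith)
    _ ≤ 2 / π * B * (1 - B) := hc ▸ sq_stdNormalPDF_le c

theorem alternating_normal_sum_bound_general (n : ℕ) (x : Fin n → ℝ)
    (hx : Antitone x) :
    (∑ k : Fin n, (-1 : ℝ) ^ (k : ℕ) * stdNormalPDF (x k)) ^ 2 ≤
      (2 / Real.pi) * (∑ k : Fin n, (-1 : ℝ) ^ (k : ℕ) * stdNormalCDF (x k)) *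
        (1 - ∑ k : Fin n, (-1 : ℝ) ^ (k : ℕ) * stdNormalCDF (x k)) := by
  set ψ : ℝ → ℝ := fun u => ∑ k : Fin n, (-1 : ℝ) ^ (k : ℕ) * (Iic (x k)).indicator 1 u
  have hψm : Measurable ψ :=
    Finset.measurable_sum _ fun k _ => (measurable_const.indicator measurableSet_Iic).const_mul _
  have hcdf : ∑ k : Fin n, (-1 : ℝ) ^ (k : ℕ) * stdNormalCDF (x k) =
      ∫ u, ψ u * stdNormalPDF u :=
    (integral_sum_indicator_mul _ _ (fun _ => measurableSet_Iic) integrable_stdNormalPDF).symm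
  have hpdf : ∑ k : Fin n, (-1 : ℝ) ^ (k : ℕ) * stdNormalPDF (x k) =
      -∫ u, ψ u * (u * stdNormalPDF u) := by
    rw [integral_sum_indicator_mul _ _ (fun _ => measurableSet_Iic) integrable_mul_stdNormalPDF,
      ← Finset.sum_neg_distrib]
    simp [setIntegral_Iic_mul_stdNormalPDF]
  rw [hcdf, hpdf, neg_sq]
  exact sq_integral_mul_id_mul_stdNormalPDF_le hψm (alternating_sum_indicator_Iic_mem_Icc hx)

/-- For `x₁ ≥ x₂ ≥ … ≥ xₙ`, setting `S_φ = Σ_{k=1}^n (−1)^{k+1} φ(x_k)` and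
`S_Φ = Σ_{k=1}^n (−1)^{k+1} Φ(x_k)`, we have `S_φ² ≤ (2/π) S_Φ (1 − S_Φ)`. -/
theorem alternating_normal_sum_bound (n : ℕ) (hn : 1 ≤ n) (x : Fin n → ℝ)
    (hx : Antitone x) :
    (∑ k : Fin n, (-1 : ℝ) ^ (k : ℕ) * stdNormalPDF (x k)) ^ 2 ≤
      (2 / Real.pi) * (∑ k : Fin n, (-1 : ℝ) ^ (k : ℕ) * stdNormalCDF (x k)) *
        (1 - ∑ k : Fin n, (-1 : ℝ) ^ (k : ℕ) * stdNormalCDF (x k)) :=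
  alternating_normal_sum_bound_general n x hx
end

section
/- Let f be a log-concave probability density on ℝ that is continuous, strictly positive, and has finite first moment, and let F(x) = ∫_{−∞}^x f(u) du. Then the function h⁻(x) = x − (∫_{−∞}^x u f(u) du)/(∫_{−∞}^x f(u) du) is monotonically nondecreasing on ℝ; equivalently, for every τ ∈ ℝ, f(τ) · ∫_{−∞}^τ f(x)(τ − x) dx ≤ (F(τ))². -/
/-!
Log-concavity gives `f x * f τ ≤ f s * f (x + τ - s)` for `x ≤ s ≤ τ`; integrating over
`x ≤ s` yields `f τ * F s ≤ f s * F τ`, i.e. `f / F` is antitone. By Fubini,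
`∫_{-∞}^τ f(x)(τ - x) dx = ∫_{-∞}^τ F(s) ds`, and bounding `f τ * F s` by `f s * F τ` under this
integral gives `f(τ) ∫_{-∞}^τ f(x)(τ - x) dx ≤ F(τ)²`, which is precisely the nonnegativity of
the derivative `1 - f(τ) (τ F(τ) - ∫_{-∞}^τ u f(u) du) / F(τ)²` of `h⁻`.
-/

open Real MeasureTheory Set

theorem ConcaveOn.map_add_map_le_of_le_of_le {s : Set ℝ} {φ : ℝ → ℝ} (hφ : ConcaveOn ℝ s φ)
    {a b c : ℝ} (ha : a ∈ s) (hc : c ∈ s) (hab : a ≤ b) (hbc : b ≤ c) :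
    φ a + φ c ≤ φ b + φ (a + c - b) := by
  rcases (hab.trans hbc).eq_or_lt with rfl | hac
  · obtain rfl : a = b := le_antisymm hab hbc
    simp
  set t := (b - a) / (c - a)
  have ht0 : 0 ≤ t := div_nonneg (sub_nonneg.2 hab) (sub_pos.2 hac).le
  have ht1 : t ≤ 1 := (div_le_one (sub_pos.2 hac)).2 (by linarith)
  have hb : (1 - t) • a + t • c = b := by
    simp only [smul_eq_mul, t]; field_simp; ring
  have hb' : t • a + (1 - t) • c = a + c - b := by
    simp only [smul_eq_mul, t]; field_simp; ring
  have h₁ := hφ.2 ha hc (sub_nonneg.2 ht1) ht0 (by ring)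
  have h₂ := hφ.2 ha hc ht0 (sub_nonneg.2 ht1) (by ring)
  rw [hb] at h₁
  rw [hb'] at h₂
  simp only [smul_eq_mul] at h₁ h₂
  linarith

theorem mul_le_mul_of_concaveOn_log {f : ℝ → ℝ} (hf_pos : ∀ x, 0 < f x)
    (hf_logconc : ConcaveOn ℝ univ (fun x => log (f x))) {a b c : ℝ} (hab : a ≤ b) (hbc : b ≤ c) :
    f a * f c ≤ f b * f (a + c - b) := by
  have h := hf_logconc.map_add_map_le_of_le_of_le (mem_univ a) (mem_univ c) hab hbc
  rwa [← log_mul (hf_pos _).ne' (hf_pos _).ne', ← log_mul (hf_pos _).ne' (hf_pos _).ne',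
    log_le_log_iff (mul_pos (hf_pos _) (hf_pos _)) (mul_pos (hf_pos _) (hf_pos _))] at h

theorem integral_Iic_comp_add_right (g : ℝ → ℝ) (a c : ℝ) :
    ∫ x in Iic a, g (x + c) = ∫ x in Iic (a + c), g x := by
  have hpre : (· + c) ⁻¹' Iic (a + c) = Iic a := by ext x; simp
  rw [← hpre]
  exact (measurePreserving_add_right volume c).setIntegral_preimage_emb
    (Homeomorph.addRight c).measurableEmbedding g (Iic (a + c))

theorem mul_integral_Iic_le_mul_integral_Iic {f : ℝ → ℝ} (hf_pos : ∀ x, 0 < f x)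
    (hf_logconc : ConcaveOn ℝ univ (fun x => log (f x))) (hf_int : Integrable f)
    {s τ : ℝ} (hsτ : s ≤ τ) :
    f τ * ∫ x in Iic s, f x ≤ f s * ∫ x in Iic τ, f x := by
  calc f τ * ∫ x in Iic s, f x
      = ∫ x in Iic s, f x * f τ := by rw [integral_mul_const, mul_comm]
    _ ≤ ∫ x in Iic s, f s * f (x + (τ - s)) := by
        refine setIntegral_mono_on (hf_int.mul_const _).integrableOn
          ((hf_int.comp_add_right _).const_mul _).integrableOn measurableSet_Iic fun x hx => ?_
        simpa only [add_sub_assoc] using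
          mul_le_mul_of_concaveOn_log hf_pos hf_logconc (mem_Iic.1 hx) hsτ
    _ = f s * ∫ x in Iic τ, f x := by
        rw [integral_const_mul, integral_Iic_comp_add_right, add_sub_cancel]

section RepeatedIntegral

noncomputable def triangleIndicator (g : ℝ → ℝ) (τ : ℝ) : ℝ × ℝ → ℝ :=
  {p : ℝ × ℝ | p.1 ≤ p.2 ∧ p.2 ≤ τ}.indicator fun p => g p.1

variable (g : ℝ → ℝ) (τ : ℝ)

theorem triangleIndicator_section_left (x : ℝ) :
    (fun s => triangleIndicator g τ (x, s)) = (Icc x τ).indicator fun _ => g x := by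
  ext s; simp [triangleIndicator, indicator_apply]

theorem triangleIndicator_section_right {s : ℝ} (hs : s ≤ τ) :
    (fun x => triangleIndicator g τ (x, s)) = (Iic s).indicator g := by
  ext x; simp [triangleIndicator, indicator_apply, hs]

theorem norm_triangleIndicator (p : ℝ × ℝ) :
    ‖triangleIndicator g τ p‖ = triangleIndicator (fun x => ‖g x‖) τ p :=
  norm_indicator_eq_indicator_norm _ p

theorem integral_triangleIndicator_left (x : ℝ) :
    ∫ s, triangleIndicator g τ (x, s) = (Iic τ).indicator (fun x => g x * (τ - x)) x := by
  rw [triangleIndicator_section_left, integral_indicator_const _ measurableSet_Icc,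
    volume_real_Icc, smul_eq_mul]
  by_cases hx : x ≤ τ
  · simp [hx, mul_comm]
  · simp [hx, (not_le.1 hx).le]

theorem integral_triangleIndicator_right (s : ℝ) :
    ∫ x, triangleIndicator g τ (x, s) = (Iic τ).indicator (fun s => ∫ x in Iic s, g x) s := by
  by_cases hs : s ≤ τ
  · rw [triangleIndicator_section_right g τ hs, integral_indicator measurableSet_Iic,
      indicator_of_mem (mem_Iic.2 hs)]
  · simp [triangleIndicator, hs]

variable {g}

theorem integrable_triangleIndicator (hg : Integrable g) (hxg : Integrable fun x => x * g x) :
    Integrable (triangleIndicator g τ) (volume.prod volume) := by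
  have hS : MeasurableSet {p : ℝ × ℝ | p.1 ≤ p.2 ∧ p.2 ≤ τ} :=
    (measurableSet_le measurable_fst measurable_snd).inter (measurable_snd measurableSet_Iic)
  have hmeas : AEStronglyMeasurable (triangleIndicator g τ) (volume.prod volume) :=
    hg.aestronglyMeasurable.comp_fst.indicator hS
  refine (integrable_prod_iff hmeas).2 ⟨?_, ?_⟩
  · refine .of_forall fun x => ?_
    rw [triangleIndicator_section_left]
    exact (integrableOn_const measure_Icc_lt_top.ne).integrable_indicator measurableSet_Icc
  · have hmoment : Integrable fun x => g x * (τ - x) :=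
      ((hg.mul_const τ).sub hxg).congr (.of_forall fun x => by simp only [Pi.sub_apply]; ring)
    simp only [norm_triangleIndicator, integral_triangleIndicator_left]
    have hnorm : (Iic τ).indicator (fun x => ‖g x‖ * (τ - x)) =
        (Iic τ).indicator fun x => ‖g x * (τ - x)‖ :=
      indicator_congr fun x hx => by rw [norm_mul, norm_of_nonneg (sub_nonneg.2 hx)]
    rw [hnorm]
    exact hmoment.norm.indicator measurableSet_Iic

theorem integrableOn_integral_Iic (hg : Integrable g) (hxg : Integrable fun x => x * g x) :
    IntegrableOn (fun s => ∫ x in Iic s, g x) (Iic τ) := by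
  rw [← integrable_indicator_iff measurableSet_Iic]
  simpa only [integral_triangleIndicator_right] using
    (integrable_triangleIndicator τ hg hxg).integral_prod_right

theorem integral_Iic_integral_Iic (hg : Integrable g) (hxg : Integrable fun x => x * g x) :
    ∫ s in Iic τ, ∫ x in Iic s, g x = ∫ x in Iic τ, g x * (τ - x) := by
  rw [← integral_indicator measurableSet_Iic, ← integral_indicator measurableSet_Iic]
  simp only [← integral_triangleIndicator_left, ← integral_triangleIndicator_right]
  exact (integral_integral_swap (f := fun x s => triangleIndicator g τ (x, s))
    (integrable_triangleIndicator τ hg hxg)).symm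

end RepeatedIntegral

theorem integral_Iic_mul_sub {g : ℝ → ℝ} (hg : Integrable g) (hxg : Integrable fun x => x * g x)
    (τ : ℝ) :
    ∫ x in Iic τ, g x * (τ - x) = τ * (∫ x in Iic τ, g x) - ∫ x in Iic τ, x * g x := by
  rw [← integral_const_mul, ← integral_sub (hg.const_mul τ).integrableOn hxg.integrableOn]
  congr 1 with x
  ring

theorem hasDerivAt_integral_Iic {g : ℝ → ℝ} (hg : Integrable g) {x : ℝ}
    (hgx : ContinuousAt g x) : HasDerivAt (fun y => ∫ t in Iic y, g t) (g x) x := by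
  have h : (fun y => ∫ t in Iic y, g t) =
      fun y => (∫ t in Iic 0, g t) + ∫ t in (0 : ℝ)..y, g t := by
    ext y
    rw [← intervalIntegral.integral_Iic_sub_Iic hg.integrableOn hg.integrableOn]
    ring
  rw [h]
  exact (intervalIntegral.integral_hasDerivAt_right hg.intervalIntegrable
    hg.aestronglyMeasurable.stronglyMeasurableAtFilter hgx).const_add _

theorem integral_Iic_pos {f : ℝ → ℝ} (hf_pos : ∀ x, 0 < f x) (hf_int : Integrable f) (τ : ℝ) :
    0 < ∫ x in Iic τ, f x := by
  rw [setIntegral_pos_iff_support_of_nonneg_ae (.of_forall fun x => (hf_pos x).le)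
    hf_int.integrableOn, Function.support_eq_univ fun x => (hf_pos x).ne', univ_inter,
    volume_Iic]
  exact ENNReal.zero_lt_top

theorem mul_integral_Iic_mul_sub_le_sq {f : ℝ → ℝ} (hf_pos : ∀ x, 0 < f x)
    (hf_logconc : ConcaveOn ℝ univ (fun x => log (f x))) (hf_int : Integrable f)
    (hf_mom : Integrable fun x => x * f x) (τ : ℝ) :
    f τ * ∫ x in Iic τ, f x * (τ - x) ≤ (∫ x in Iic τ, f x) ^ 2 := by
  rw [← integral_Iic_integral_Iic τ hf_int hf_mom]
  calc f τ * ∫ s in Iic τ, ∫ x in Iic s, f x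
      = ∫ s in Iic τ, f τ * ∫ x in Iic s, f x := (integral_const_mul _ _).symm
    _ ≤ ∫ s in Iic τ, f s * ∫ x in Iic τ, f x :=
        setIntegral_mono_on ((integrableOn_integral_Iic τ hf_int hf_mom).const_mul _)
          (hf_int.integrableOn.mul_const _) measurableSet_Iic fun s hs =>
          mul_integral_Iic_le_mul_integral_Iic hf_pos hf_logconc hf_int hs
    _ = (∫ x in Iic τ, f x) ^ 2 := by rw [integral_mul_const, sq]

theorem cond_mean_below_monotone_general (f : ℝ → ℝ)
    (hf_pos : ∀ x, 0 < f x)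
    (hf_cont : Continuous f)
    (hf_logconc : ConcaveOn ℝ Set.univ (fun x => Real.log (f x)))
    (hf_int : Integrable f)
    (hf_mom : Integrable (fun u => u * f u)) :
    Monotone (fun x => x - (∫ u in Set.Iic x, u * f u) / (∫ u in Set.Iic x, f u)) ∧
      ∀ τ : ℝ, f τ * ∫ x in Set.Iic τ, f x * (τ - x) ≤ (∫ u in Set.Iic τ, f u) ^ 2 := by
  have key := mul_integral_Iic_mul_sub_le_sq hf_pos hf_logconc hf_int hf_mom
  refine ⟨?_, key⟩
  have hderiv : ∀ x, HasDerivAt (fun x => x - (∫ u in Iic x, u * f u) / ∫ u in Iic x, f u)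
      (1 - (x * f x * (∫ u in Iic x, f u) - (∫ u in Iic x, u * f u) * f x) /
        (∫ u in Iic x, f u) ^ 2) x := fun x =>
    (hasDerivAt_id x).sub ((hasDerivAt_integral_Iic hf_mom (by fun_prop)).div
      (hasDerivAt_integral_Iic hf_int hf_cont.continuousAt) (integral_Iic_pos hf_pos hf_int x).ne')
  refine monotone_of_deriv_nonneg (fun x => (hderiv x).differentiableAt) fun x => ?_
  have hx := key x
  rw [integral_Iic_mul_sub hf_int hf_mom] at hx
  rw [(hderiv x).deriv, sub_nonneg, div_le_one (pow_pos (integral_Iic_pos hf_pos hf_int x) 2)]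
  linarith

/-- For a log-concave, continuous, strictly positive probability density `f` on `ℝ` with
finite first moment, the function `h⁻(x) = x − (∫_{−∞}^x u f(u) du)/(∫_{−∞}^x f(u) du)`
is monotonically nondecreasing; equivalently, for every `τ`,
`f(τ) · ∫_{−∞}^τ f(x)(τ − x) dx ≤ (F(τ))²` where `F(x) = ∫_{−∞}^x f`. -/
theorem cond_mean_below_monotone (f : ℝ → ℝ)
    (hf_pos : ∀ x, 0 < f x)
    (hf_cont : Continuous f)
    (hf_logconc : ConcaveOn ℝ Set.univ (fun x => Real.log (f x)))
    (hf_int : Integrable f)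
    (hf_prob : ∫ x, f x = 1)
    (hf_mom : Integrable (fun u => u * f u)) :
    Monotone (fun x => x - (∫ u in Set.Iic x, u * f u) / (∫ u in Set.Iic x, f u)) ∧
      ∀ τ : ℝ, f τ * ∫ x in Set.Iic τ, f x * (τ - x) ≤ (∫ u in Set.Iic τ, f u) ^ 2 :=
  cond_mean_below_monotone_general f hf_pos hf_cont hf_logconc hf_int hf_mom
end

section
/- Let g : ℝ → ℝ be a concave differentiable function such that x ↦ e^{g(x)} is integrable on (−∞, τ] and lim_{x→−∞} e^{g(x)} = 0. Then g'(τ) · ∫_{−∞}^τ e^{g(x)} dx ≤ e^{g(τ)}. -/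
open Real MeasureTheory Filter

/-- If `g : ℝ → ℝ` is concave and differentiable, `e^{g}` is integrable on `(−∞, τ]` and
`e^{g(x)} → 0` as `x → −∞`, then `g'(τ) · ∫_{−∞}^τ e^{g(x)} dx ≤ e^{g(τ)}`. -/
theorem deriv_mul_integral_exp_le (g : ℝ → ℝ) (τ : ℝ)
    (hconc : ConcaveOn ℝ Set.univ g)
    (hdiff : Differentiable ℝ g)
    (hint : IntegrableOn (fun x => Real.exp (g x)) (Set.Iic τ))
    (hlim : Tendsto (fun x => Real.exp (g x)) atBot (nhds 0)) :
    deriv g τ * ∫ x in Set.Iic τ, Real.exp (g x) ≤ Real.exp (g τ) := by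
  rcases le_or_gt (deriv g τ) 0 with hc | hc
  · have h1 : 0 ≤ ∫ x in Set.Iic τ, Real.exp (g x) :=
      integral_nonneg fun x => (Real.exp_pos _).le
    nlinarith [Real.exp_pos (g τ), mul_nonneg (neg_nonneg.2 hc) h1]
  · set c := deriv g τ with hcdef
    have hcne : c ≠ 0 := ne_of_gt hc
    -- pointwise bound from concavity
    have key : ∀ x ∈ Set.Iic τ, Real.exp (g x) ≤ Real.exp (g τ) * Real.exp (c * (x - τ)) := by
      intro x hx
      rcases (Set.mem_Iic.mp hx).eq_or_lt with rfl | hlt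
      · simp
      · have hs := hconc.deriv_le_slope (Set.mem_univ x) (Set.mem_univ τ) hlt (hdiff τ)
        rw [slope_def_field] at hs
        have hτx : 0 < τ - x := by linarith
        have : c * (τ - x) ≤ g τ - g x := by
          rw [div_eq_inv_mul] at hs
          calc c * (τ - x) ≤ ((τ - x)⁻¹ * (g τ - g x)) * (τ - x) := by
                exact mul_le_mul_of_nonneg_right hs hτx.le
            _ = g τ - g x := by field_simp
        have hgx : g x ≤ g τ + c * (x - τ) := by nlinarith
        calc Real.exp (g x) ≤ Real.exp (g τ + c * (x - τ)) := Real.exp_le_exp.2 hgx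
          _ = Real.exp (g τ) * Real.exp (c * (x - τ)) := Real.exp_add _ _
    -- derivative facts for F x = c⁻¹ * exp (c*(x-τ))
    have hF : ∀ x : ℝ, HasDerivAt (fun y => c⁻¹ * Real.exp (c * (y - τ)))
        (Real.exp (c * (x - τ))) x := by
      intro x
      have h1 : HasDerivAt (fun y : ℝ => c * (y - τ)) c x := by
        simpa using ((hasDerivAt_id x).sub_const τ).const_mul c
      have h2 := h1.exp
      have h3 := h2.const_mul c⁻¹
      have : c⁻¹ * (Real.exp (c * (x - τ)) * c) = Real.exp (c * (x - τ)) := by field_simp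
      rwa [this] at h3
    -- integrability of the dominating function
    have hcont : Continuous fun x : ℝ => Real.exp (c * (x - τ)) := by continuity
    have hbound : ∀ a : ℝ, (∫ x in a..τ, ‖Real.exp (c * (x - τ))‖) ≤ c⁻¹ := by
      intro a
      rcases le_or_gt a τ with haτ | haτ
      · have := intervalIntegral.integral_eq_sub_of_hasDerivAt
          (f := fun y => c⁻¹ * Real.exp (c * (y - τ)))
          (fun x _ => hF x) (hcont.intervalIntegrable a τ)
        have hnorm : ∀ x, ‖Real.exp (c * (x - τ))‖ = Real.exp (c * (x - τ)) := fun x =>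
          Real.norm_of_nonneg (Real.exp_pos _).le
        simp only [hnorm]
        rw [this]
        have h0 : 0 < Real.exp (c * (a - τ)) := Real.exp_pos _
        have h1 : 0 < c⁻¹ := inv_pos.2 hc
        simp only [sub_self, mul_zero, Real.exp_zero, mul_one]
        nlinarith
      · rw [intervalIntegral.integral_symm]
        have h1 : 0 ≤ ∫ x in τ..a, ‖Real.exp (c * (x - τ))‖ :=
          intervalIntegral.integral_nonneg haτ.le fun x _ => norm_nonneg _
        have h2 : 0 ≤ c⁻¹ := (inv_pos.2 hc).le
        linarith
    have hintc : IntegrableOn (fun x => Real.exp (c * (x - τ))) (Set.Iic τ) := by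
      refine integrableOn_Iic_of_intervalIntegral_norm_bounded (a := id) (l := atBot)
        c⁻¹ τ (fun i => (hcont.integrableOn_Ioc)) tendsto_id ?_
      exact Eventually.of_forall fun a => hbound a
    -- value of the dominating integral
    have hval : (∫ x in Set.Iic τ, Real.exp (c * (x - τ))) = c⁻¹ := by
      have htend : Tendsto (fun y => c⁻¹ * Real.exp (c * (y - τ))) atBot (nhds 0) := by
        have h1 : Tendsto (fun y : ℝ => c * (y - τ)) atBot atBot := by
          apply Tendsto.const_mul_atBot hc
          exact tendsto_atBot_add_const_right _ (-τ) tendsto_id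
        have h2 := Real.tendsto_exp_atBot.comp h1
        simpa using h2.const_mul c⁻¹
      have := integral_Iic_of_hasDerivAt_of_tendsto' (fun x _ => hF x) hintc htend
      rw [this]
      simp
    -- compare integrals
    have hmono : (∫ x in Set.Iic τ, Real.exp (g x)) ≤
        ∫ x in Set.Iic τ, Real.exp (g τ) * Real.exp (c * (x - τ)) := by
      refine setIntegral_mono_on hint (hintc.const_mul _) measurableSet_Iic key
    rw [integral_const_mul, hval] at hmono
    have h1 : 0 < c⁻¹ := inv_pos.2 hc
    calc c * ∫ x in Set.Iic τ, Real.exp (g x)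
        ≤ c * (Real.exp (g τ) * c⁻¹) := by
          exact mul_le_mul_of_nonneg_left hmono hc.le
      _ = Real.exp (g τ) := by field_simp
end

section
/- Let σ > 0 and σ_θ > 0. For each n ≥ 1, let D_n > 0 be a solution of the equation n = (1/2) · log₂[ (σ_θ²/D_n) · ( D_n n / (D_n n − σ² + D_n σ²/σ_θ²) )ⁿ ] with D_n n − σ² + D_n σ²/σ_θ² > 0. Then D_n = 4σ²/(3n + 4σ²/σ_θ²) + o(n⁻¹); in particular lim_{n→∞} n · D_n = 4σ²/3. -/
/-!
Write `rₙ = Dₙ n / (Dₙ n − σ² + Dₙ σ²/σ_θ²)`. The defining equation says `rₙⁿ = 4ⁿ Dₙ/σ_θ²`,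
which forces `Dₙ < σ_θ²` (otherwise `rₙ ≤ 1`). Clearing the denominator of `rₙ` gives
`Dₙ (n (rₙ − 1) + rₙ σ²/σ_θ²) = rₙ σ²`, whence `Dₙ ≥ c/n`. So `Dₙ/σ_θ²` lies between `c/n`
and `1`, its `n`-th root tends to `1`, hence `rₙ → 4` and
`n Dₙ = rₙ σ² / (rₙ − 1 + rₙ σ²/(σ_θ² n)) → 4σ²/3`.
-/

open Real Filter Asymptotics Topology

theorem tendsto_div_natCast_rpow_inv {c : ℝ} (hc : 0 < c) :
    Tendsto (fun n : ℕ => (c / n) ^ (n : ℝ)⁻¹) atTop (𝓝 1) := by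
  have hc' : Tendsto (fun n : ℕ => c ^ (n : ℝ)⁻¹) atTop (𝓝 1) := by
    simpa [Function.comp_def] using (continuousAt_const_rpow hc.ne' (b := 0)).tendsto.comp
      (tendsto_inv_atTop_zero.comp tendsto_natCast_atTop_atTop)
  have hn : Tendsto (fun n : ℕ => (n : ℝ) ^ (n : ℝ)⁻¹) atTop (𝓝 1) := by
    simpa only [one_div, Function.comp_def] using tendsto_rpow_div.comp tendsto_natCast_atTop_atTop
  refine (div_one (1 : ℝ) ▸ hc'.div hn one_ne_zero).congr fun n => ?_
  exact (div_rpow hc.le (Nat.cast_nonneg n) _).symm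

theorem tendsto_of_pow_eq_pow_mul {a c : ℝ} {r x : ℕ → ℝ} (ha : 0 ≤ a) (hc : 0 < c)
    (hr : ∀ᶠ n in atTop, 0 ≤ r n) (hlow : ∀ᶠ n in atTop, c / n ≤ x n)
    (hup : ∀ᶠ n in atTop, x n ≤ 1) (h : ∀ᶠ n in atTop, r n ^ n = a ^ n * x n) :
    Tendsto r atTop (𝓝 a) := by
  have hroot : ∀ᶠ n in atTop, r n = a * x n ^ (n : ℝ)⁻¹ := by
    filter_upwards [hr, hlow, h, eventually_ge_atTop 1] with n hrn hxn hn hn1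
    have hx : 0 ≤ x n := le_trans (by positivity) hxn
    have hn0 : n ≠ 0 := by omega
    rw [← pow_rpow_inv_natCast hrn hn0, hn, mul_rpow (by positivity) hx,
      pow_rpow_inv_natCast ha hn0]
  have hlim : Tendsto (fun n : ℕ => a * (c / n) ^ (n : ℝ)⁻¹) atTop (𝓝 a) := by
    simpa using (tendsto_div_natCast_rpow_inv hc).const_mul a
  refine tendsto_of_tendsto_of_tendsto_of_le_of_le' hlim tendsto_const_nhds ?_ ?_
  · filter_upwards [hroot, hlow] with n hrn hxn
    rw [hrn]
    gcongr
  · filter_upwards [hroot, hlow, hup] with n hrn hxn hx1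
    rw [hrn]
    exact mul_le_of_le_one_right ha
      (rpow_le_one (le_trans (by positivity) hxn) hx1 (by positivity))

theorem tendsto_natCast_mul_of_mul_eq {a s k : ℝ} {r D : ℕ → ℝ}
    (hr : Tendsto r atTop (𝓝 a)) (ha : a ≠ 1)
    (h : ∀ᶠ n in atTop, D n * (n * (r n - 1) + r n * k) = r n * s) :
    Tendsto (fun n : ℕ => n * D n) atTop (𝓝 (a * s / (a - 1))) := by
  have hq : Tendsto (fun n : ℕ => r n - 1 + r n * k * (n : ℝ)⁻¹) atTop (𝓝 (a - 1)) := by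
    simpa using (hr.sub_const 1).add
      ((hr.mul_const k).mul (tendsto_inv_atTop_zero.comp tendsto_natCast_atTop_atTop))
  refine ((hr.mul_const s).div hq (sub_ne_zero.2 ha)).congr' ?_
  filter_upwards [h, hq.eventually_ne (sub_ne_zero.2 ha), eventually_ne_atTop 0]
    with n hn hqn hn0
  have hn0' : (n : ℝ) ≠ 0 := Nat.cast_ne_zero.2 hn0
  rw [Pi.div_apply, eq_comm, eq_div_iff hqn, ← hn]
  field_simp

theorem tendsto_natCast_mul_div_mul_add (c d : ℝ) {a : ℝ} (ha : a ≠ 0) :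
    Tendsto (fun n : ℕ => n * (c / (a * n + d))) atTop (𝓝 (c / a)) := by
  have hden : Tendsto (fun n : ℕ => a + d * (n : ℝ)⁻¹) atTop (𝓝 a) := by
    simpa using (tendsto_inv_atTop_zero.comp tendsto_natCast_atTop_atTop).const_mul d
      |>.const_add a
  refine (tendsto_const_nhds.div hden ha).congr' ?_
  filter_upwards [eventually_ne_atTop 0] with n hn
  have hn' : (n : ℝ) ≠ 0 := Nat.cast_ne_zero.2 hn
  simp only [Pi.div_apply]
  field_simp

theorem isLittleO_inv_of_tendsto_natCast_mul {f g : ℕ → ℝ} {L : ℝ}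
    (hf : Tendsto (fun n : ℕ => n * f n) atTop (𝓝 L))
    (hg : Tendsto (fun n : ℕ => n * g n) atTop (𝓝 L)) :
    (fun n => f n - g n) =o[atTop] (fun n : ℕ => (n : ℝ)⁻¹) := by
  refine (isLittleO_iff_tendsto' ?_).2 ?_
  · filter_upwards [eventually_ne_atTop 0] with n hn h
    simp_all
  · simpa [div_inv_eq_mul, sub_mul, mul_comm] using hf.sub hg

/-- `s` and `t` play the roles of `σ²` and `σ_θ²`. -/
noncomputable def ceoRatio (s t D : ℝ) (n : ℕ) : ℝ := D * n / (D * n - s + D * s / t)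

section ceoRatio

variable {s t D : ℝ} {n : ℕ}

theorem ceoRatio_pos (hD : 0 < D) (hn : 0 < n) (hden : 0 < D * n - s + D * s / t) :
    0 < ceoRatio s t D n :=
  div_pos (mul_pos hD (Nat.cast_pos.2 hn)) hden

theorem ceoRatio_pow_eq (ht : 0 < t) (hD : 0 < D) (hn : 0 < n)
    (hden : 0 < D * n - s + D * s / t)
    (h : (n : ℝ) = 1 / 2 * logb 2 (t / D * ceoRatio s t D n ^ n)) :
    ceoRatio s t D n ^ n = 4 ^ n * (D / t) := by
  have hlogb : logb 2 (t / D * ceoRatio s t D n ^ n) = (2 * n : ℕ) := by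
    push_cast; linarith
  rw [logb_eq_iff_rpow_eq (by norm_num) (by norm_num)
    (by have := ceoRatio_pos hD hn hden; positivity), rpow_natCast, pow_mul] at hlogb
  rw [show ((2 : ℝ) ^ 2) = 4 by norm_num] at hlogb
  rw [hlogb]
  field_simp

theorem lt_of_ceoRatio_pow_eq (hs : 0 < s) (ht : 0 < t) (hD : 0 < D) (hn : 0 < n)
    (hden : 0 < D * n - s + D * s / t) (h : ceoRatio s t D n ^ n = 4 ^ n * (D / t)) :
    D < t := by
  by_contra! htD
  have hr : ceoRatio s t D n ≤ 1 := by
    refine div_le_one_of_le₀ ?_ hden.le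
    have : s ≤ D * s / t := by rw [le_div_iff₀ ht]; nlinarith
    linarith
  have h4 : 1 < 4 ^ n * (D / t) :=
    one_lt_mul_of_lt_of_le (one_lt_pow₀ (by norm_num) hn.ne') ((one_le_div ht).2 htD)
  linarith [pow_le_one₀ (n := n) (ceoRatio_pos hD hn hden).le hr]

theorem mul_ceoRatio_eq (hden : 0 < D * n - s + D * s / t) :
    D * (n * (ceoRatio s t D n - 1) + ceoRatio s t D n * (s / t)) = ceoRatio s t D n * s := by
  have h : ceoRatio s t D n * (D * n - s + D * s / t) = D * n := div_mul_cancel₀ _ hden.ne'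
  linear_combination h

theorem div_lt_of_mul_ceoRatio_eq (hs : 0 < s) (ht : 0 < t) (hD : 0 < D) (hn : 0 < n)
    (hr : 0 < ceoRatio s t D n)
    (h : D * (n * (ceoRatio s t D n - 1) + ceoRatio s t D n * (s / t)) = ceoRatio s t D n * s) :
    s / (1 + s / t) / n < D := by
  have hn1 : (1 : ℝ) ≤ n := Nat.one_le_cast.2 hn
  have hDk : 0 < D * (s / t) := mul_pos hD (div_pos hs ht)
  rw [div_div, div_lt_iff₀ (by positivity)]
  refine lt_of_mul_lt_mul_left ?_ hr.le
  nlinarith [mul_nonneg (mul_pos hr hDk).le (sub_nonneg.2 hn1), mul_pos hD hr]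

end ceoRatio

/-- Asymptotics of the minimal distortion in the quadratic Gaussian CEO problem with `n`
agents and sum-rate `n`: if `D n > 0` solves
`n = (1/2) log₂ [ (σ_θ²/Dₙ) (Dₙ n / (Dₙ n − σ² + Dₙ σ²/σ_θ²))ⁿ ]`
(with positive denominator), then `D n = 4σ²/(3n + 4σ²/σ_θ²) + o(n⁻¹)`; in particular
`n · D n → 4σ²/3`. -/
theorem ceo_distortion_asymptotics (σ σθ : ℝ) (hσ : 0 < σ) (hσθ : 0 < σθ)
    (D : ℕ → ℝ)
    (hD_pos : ∀ n : ℕ, 1 ≤ n → 0 < D n)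
    (hD_den : ∀ n : ℕ, 1 ≤ n → 0 < D n * n - σ ^ 2 + D n * σ ^ 2 / σθ ^ 2)
    (hD_eq : ∀ n : ℕ, 1 ≤ n →
      (n : ℝ) = (1 / 2) * Real.logb 2
        ((σθ ^ 2 / D n) *
          (D n * n / (D n * n - σ ^ 2 + D n * σ ^ 2 / σθ ^ 2)) ^ n)) :
    (fun n : ℕ => D n - 4 * σ ^ 2 / (3 * n + 4 * σ ^ 2 / σθ ^ 2)) =o[atTop]
        (fun n : ℕ => (n : ℝ)⁻¹) ∧
      Tendsto (fun n : ℕ => (n : ℝ) * D n) atTop (nhds (4 * σ ^ 2 / 3)) := by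
  have hs : 0 < σ ^ 2 := by positivity
  have ht : 0 < σθ ^ 2 := by positivity
  set r : ℕ → ℝ := fun n => ceoRatio (σ ^ 2) (σθ ^ 2) (D n) n
  have hr_pos (n : ℕ) (hn : 1 ≤ n) : 0 < r n := ceoRatio_pos (hD_pos n hn) hn (hD_den n hn)
  have hpow (n : ℕ) (hn : 1 ≤ n) : r n ^ n = 4 ^ n * (D n / σθ ^ 2) :=
    ceoRatio_pow_eq ht (hD_pos n hn) hn (hD_den n hn) (hD_eq n hn)
  have hmul (n : ℕ) (hn : 1 ≤ n) :
      D n * (n * (r n - 1) + r n * (σ ^ 2 / σθ ^ 2)) = r n * σ ^ 2 :=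
    mul_ceoRatio_eq (hD_den n hn)
  have hr : Tendsto r atTop (𝓝 4) := by
    refine tendsto_of_pow_eq_pow_mul (x := fun n => D n / σθ ^ 2)
      (c := σ ^ 2 / (1 + σ ^ 2 / σθ ^ 2) / σθ ^ 2) (by norm_num) (by positivity)
      (eventually_atTop.2 ⟨1, fun n hn => (hr_pos n hn).le⟩) ?_ ?_
      (eventually_atTop.2 ⟨1, hpow⟩)
    all_goals filter_upwards [eventually_ge_atTop 1] with n hn
    · rw [div_right_comm]
      exact div_le_div_of_nonneg_right
        (div_lt_of_mul_ceoRatio_eq hs ht (hD_pos n hn) hn (hr_pos n hn) (hmul n hn)).le ht.le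
    · exact (div_le_one ht).2
        (lt_of_ceoRatio_pow_eq hs ht (hD_pos n hn) hn (hD_den n hn) (hpow n hn)).le
  have hlim : Tendsto (fun n : ℕ => n * D n) atTop (𝓝 (4 * σ ^ 2 / 3)) := by
    convert tendsto_natCast_mul_of_mul_eq hr (by norm_num) (eventually_atTop.2 ⟨1, hmul⟩)
      using 2
    norm_num
  exact ⟨isLittleO_inv_of_tendsto_natCast_mul hlim
    (tendsto_natCast_mul_div_mul_add _ _ three_ne_zero), hlim⟩
end
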